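/- Let k > 1, τ₀ > 0 and C > 0. There exist constants M > 0 and ε₀ > 0 such that for all ε ∈ (0, ε₀]: if E : [0, τ₀/ε³] → [0, ∞) is differentiable, E(0) ≤ 1, and satisfies E'(t) ≤ C ε³ ( E(t) + 1 + ε^{-2} (1 + (ε t)²)^{-k/2} ) for all t in [0, τ₀/ε³], then E(t) ≤ M for all t ∈ [0, τ₀/ε³], where M can be chosen independently of ε. -/

import Mathlib

open Real Set

/-! The interaction term is dominated by `C 2^{k/2} ε (1 + ε s)^{-k}`, whose primitive
`C 2^{k/2} ((1 + ε s)^{1-k} - 1) / (1 - k)` stays below `C 2^{k/2} / (k - 1)` for all times because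
`k > 1`. Gronwall's inequality with rate `K = C ε³` and this source then bounds `E t` by
`e^{K t} (E 0 + K t + C 2^{k/2} / (k - 1))`, and `K t ≤ C τ₀` on the whole interval
`[0, τ₀ / ε³]`. -/

lemma one_add_sq_rpow_neg_le {k σ : ℝ} (hk : 0 ≤ k) (hσ : 0 ≤ σ) :
    (1 + σ ^ 2) ^ (-(k / 2)) ≤ 2 ^ (k / 2) * (1 + σ) ^ (-k) := by
  have h_sq : 2⁻¹ * (1 + σ) ^ 2 ≤ 1 + σ ^ 2 := by nlinarith [sq_nonneg (σ - 1)]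
  calc (1 + σ ^ 2) ^ (-(k / 2)) ≤ (2⁻¹ * (1 + σ) ^ 2) ^ (-(k / 2)) :=
        rpow_le_rpow_of_nonpos (by positivity) h_sq (by linarith)
    _ = 2 ^ (k / 2) * (1 + σ) ^ (-k) := by
        rw [mul_rpow (by norm_num) (by positivity), inv_rpow zero_le_two, ← rpow_neg zero_le_two,
          neg_neg, ← rpow_natCast, ← rpow_mul (by positivity)]
        norm_num [mul_div_cancel₀]

lemma hasDerivAt_one_add_mul_rpow_sub_one_div {k ε s : ℝ} (hk : k ≠ 1) (hs : 0 < 1 + ε * s) :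
    HasDerivAt (fun s ↦ ((1 + ε * s) ^ (1 - k) - 1) / (1 - k)) (ε * (1 + ε * s) ^ (-k)) s := by
  have h_base : HasDerivAt (fun s ↦ 1 + ε * s) ε s := by
    simpa using ((hasDerivAt_id s).const_mul ε).const_add 1
  refine (((h_base.rpow_const (p := 1 - k) (Or.inl hs.ne')).sub_const 1).div_const
    (1 - k)).congr_deriv ?_
  rw [sub_sub_cancel_left]
  field_simp [sub_ne_zero.2 hk.symm]

lemma rpow_sub_one_div_le {k x : ℝ} (hk : 1 < k) (hx : 0 ≤ x) :
    (x ^ (1 - k) - 1) / (1 - k) ≤ 1 / (k - 1) := by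
  calc (x ^ (1 - k) - 1) / (1 - k) = (1 - x ^ (1 - k)) / (k - 1) := by
        rw [← neg_div_neg_eq, neg_sub, neg_sub]
    _ ≤ 1 / (k - 1) :=
        div_le_div_of_nonneg_right (by linarith [rpow_nonneg hx (1 - k)]) (by linarith)

lemma mul_zpow_neg_two_mul_rpow_le {k C ε σ : ℝ} (hk : 0 ≤ k) (hC : 0 ≤ C) (hε : 0 < ε)
    (hσ : 0 ≤ σ) :
    C * ε ^ 3 * (ε ^ (-2 : ℤ) * (1 + σ ^ 2) ^ (-(k / 2))) ≤
      C * 2 ^ (k / 2) * (ε * (1 + σ) ^ (-k)) := by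
  have h_scale : ε ^ 3 * ε ^ (-2 : ℤ) = ε := by
    rw [zpow_neg]; field_simp
  calc C * ε ^ 3 * (ε ^ (-2 : ℤ) * (1 + σ ^ 2) ^ (-(k / 2)))
      = C * ε * (1 + σ ^ 2) ^ (-(k / 2)) := by
        linear_combination C * (1 + σ ^ 2) ^ (-(k / 2)) * h_scale
    _ ≤ C * ε * (2 ^ (k / 2) * (1 + σ) ^ (-k)) := by gcongr; exact one_add_sq_rpow_neg_le hk hσ
    _ = C * 2 ^ (k / 2) * (ε * (1 + σ) ^ (-k)) := by ring

theorem le_exp_mul_add_of_deriv_le {E G g : ℝ → ℝ} {K a b : ℝ} (hK : 0 ≤ K)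
    (hE : ∀ s ∈ Icc a b, DifferentiableAt ℝ E s)
    (hG : ∀ s ∈ Icc a b, HasDerivAt G (g s) s)
    (hg : ∀ s ∈ Ioo a b, 0 ≤ g s)
    (hbound : ∀ s ∈ Ioo a b, deriv E s ≤ K * E s + g s) :
    ∀ t ∈ Icc a b, E t ≤ exp (K * (t - a)) * (E a + (G t - G a)) := by
  set F : ℝ → ℝ := fun s ↦ exp (-(K * (s - a))) * E s - G s
  have hF : ∀ s ∈ Icc a b,
      HasDerivAt F (exp (-(K * (s - a))) * (deriv E s - K * E s) - g s) s := by
    intro s hs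
    have h_exp : HasDerivAt (fun s ↦ exp (-(K * (s - a)))) (exp (-(K * (s - a))) * -K) s := by
      simpa using (((hasDerivAt_id s).sub_const a).const_mul K).neg.exp
    exact ((h_exp.mul (hE s hs).hasDerivAt).sub (hG s hs)).congr_deriv (by ring)
  have hF_anti : AntitoneOn F (Icc a b) := by
    refine antitoneOn_of_deriv_nonpos (convex_Icc a b)
      (fun s hs ↦ (hF s hs).continuousAt.continuousWithinAt)
      (fun s hs ↦ (hF s (interior_subset hs)).differentiableAt.differentiableWithinAt) ?_
    intro s hs
    rw [interior_Icc] at hs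
    rw [(hF s (Ioo_subset_Icc_self hs)).deriv, sub_nonpos]
    have h_exp_le : exp (-(K * (s - a))) ≤ 1 :=
      exp_le_one_iff.2 (neg_nonpos.2 (mul_nonneg hK (sub_nonneg.2 hs.1.le)))
    calc exp (-(K * (s - a))) * (deriv E s - K * E s) ≤ exp (-(K * (s - a))) * g s := by
          gcongr; linarith [hbound s hs]
      _ ≤ g s := mul_le_of_le_one_left (hg s hs) h_exp_le
  intro t ht
  have h_Ft : F t ≤ F a := hF_anti ⟨le_rfl, ht.1.trans ht.2⟩ ht ht.1
  simp only [F, sub_self, mul_zero, neg_zero, exp_zero, one_mul] at h_Ft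
  calc E t = exp (K * (t - a)) * (exp (-(K * (t - a))) * E t) := by
        rw [← mul_assoc, ← exp_add, add_neg_cancel, exp_zero, one_mul]
    _ ≤ exp (K * (t - a)) * (E a + (G t - G a)) := by
        gcongr; linarith

lemma kdv_energy_le {k τ₀ C ε : ℝ} (hk : 1 < k) (hC : 0 ≤ C) (hε : 0 < ε)
    {E : ℝ → ℝ}
    (hE : ∀ t ∈ Icc 0 (τ₀ / ε ^ 3), DifferentiableAt ℝ E t) (hE0 : E 0 ≤ 1)
    (hE' : ∀ t ∈ Icc 0 (τ₀ / ε ^ 3), deriv E t ≤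
      C * ε ^ 3 * (E t + 1 + ε ^ (-2 : ℤ) * (1 + (ε * t) ^ 2) ^ (-(k / 2)))) :
    ∀ t ∈ Icc 0 (τ₀ / ε ^ 3),
      E t ≤ exp (C * τ₀) * (1 + C * τ₀ + C * 2 ^ (k / 2) / (k - 1)) := by
  intro t ht
  set K := C * ε ^ 3
  set c := C * 2 ^ (k / 2)
  have h_base : ∀ s ∈ Icc 0 (τ₀ / ε ^ 3), 0 < 1 + ε * s := fun s hs ↦
    add_pos_of_pos_of_nonneg one_pos (mul_nonneg hε.le hs.1)
  have h_primitive : ∀ s ∈ Icc 0 (τ₀ / ε ^ 3), HasDerivAt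
      (fun s ↦ K * s + c * (((1 + ε * s) ^ (1 - k) - 1) / (1 - k)))
      (K + c * (ε * (1 + ε * s) ^ (-k))) s := fun s hs ↦
    (((hasDerivAt_id s).const_mul K).add
      ((hasDerivAt_one_add_mul_rpow_sub_one_div hk.ne' (h_base s hs)).const_mul c)).congr_deriv
      (by simp)
  have h_source : ∀ s ∈ Ioo 0 (τ₀ / ε ^ 3), 0 ≤ K + c * (ε * (1 + ε * s) ^ (-k)) := by
    intro s hs
    have := h_base s (Ioo_subset_Icc_self hs)
    positivity
  have h_deriv : ∀ s ∈ Ioo 0 (τ₀ / ε ^ 3),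
      deriv E s ≤ K * E s + (K + c * (ε * (1 + ε * s) ^ (-k))) := by
    intro s hs
    have hs' := Ioo_subset_Icc_self hs
    have := mul_zpow_neg_two_mul_rpow_le (k := k) (by linarith) hC hε (mul_nonneg hε.le hs'.1)
    linarith [hE' s hs']
  have h_gronwall :=
    le_exp_mul_add_of_deriv_le (by positivity) hE h_primitive h_source h_deriv t ht
  simp only [sub_zero, mul_zero, add_zero, one_rpow, sub_self, zero_div] at h_gronwall
  have h_Kt : K * t ≤ C * τ₀ := by
    have : ε ^ 3 * t ≤ τ₀ := by rw [← le_div_iff₀' (by positivity)]; exact ht.2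
    simp only [K, mul_assoc]; gcongr
  have h_tail := mul_le_mul_of_nonneg_left (rpow_sub_one_div_le hk (h_base t ht).le)
    (by positivity : 0 ≤ c)
  have h_k : 0 < k - 1 := sub_pos.2 hk
  have h_τ₀ : 0 ≤ C * τ₀ := (mul_nonneg (by positivity) ht.1).trans h_Kt
  calc E t ≤ exp (K * t) * (E 0 + (K * t + c * (((1 + ε * t) ^ (1 - k) - 1) / (1 - k)))) :=
        h_gronwall
    _ ≤ exp (K * t) * (1 + C * τ₀ + c / (k - 1)) := by
        gcongr ?_ * ?_
        rw [mul_one_div] at h_tail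
        linarith
    _ ≤ exp (C * τ₀) * (1 + C * τ₀ + c / (k - 1)) := by gcongr

theorem kdv_gronwall_lemma
    (k τ₀ C : ℝ) (hk : 1 < k) (hτ₀ : 0 < τ₀) (hC : 0 < C) :
    ∃ M > 0, ∃ ε₀ > 0, ∀ ε : ℝ, 0 < ε → ε ≤ ε₀ →
      ∀ E : ℝ → ℝ,
        (∀ t ∈ Set.Icc (0 : ℝ) (τ₀ / ε ^ 3), 0 ≤ E t) →
        (∀ t ∈ Set.Icc (0 : ℝ) (τ₀ / ε ^ 3), DifferentiableAt ℝ E t) →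
        E 0 ≤ 1 →
        (∀ t ∈ Set.Icc (0 : ℝ) (τ₀ / ε ^ 3),
          deriv E t ≤ C * ε ^ 3 *
            (E t + 1 + ε ^ (-2 : ℤ) * (1 + (ε * t) ^ 2) ^ (-(k / 2)))) →
        ∀ t ∈ Set.Icc (0 : ℝ) (τ₀ / ε ^ 3), E t ≤ M := by
  have h_k : 0 < k - 1 := sub_pos.2 hk
  exact ⟨_, by positivity, 1, one_pos,
    fun ε hε _ E _ hE hE0 hE' ↦ kdv_energy_le hk hC.le hε hE hE0 hE'⟩
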